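/- arXiv:2203.10142 — 3 statements merged into one kernel-verified Lean document; each statement's English description precedes it below -/
import Mathlib

section
/- With X, U, D nonempty finite types, γ ∈ [0,1), and the Bellman operator B[V](x) = min(c(x), max(r(x), γ · max_u min_d V(f(x,u,d)))), there exists at most one fixed point: if B[V₁] = V₁ and B[V₂] = V₂ then V₁ = V₂. -/
lemma abs_sup'_sub_sup'_le {α : Type*} (s : Finset α) (hs : s.Nonempty) (f g : α → ℝ) (M : ℝ)
    (h : ∀ i ∈ s, |f i - g i| ≤ M) : |s.sup' hs f - s.sup' hs g| ≤ M := by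
  rw [abs_sub_le_iff]
  constructor <;> rw [sub_le_iff_le_add] <;> apply Finset.sup'_le <;> intro i hi
  · have := (abs_sub_le_iff.mp (h i hi)).1
    calc f i ≤ g i + M := by linarith
    _ ≤ M + s.sup' hs g := by linarith [Finset.le_sup' g hi]
  · have := (abs_sub_le_iff.mp (h i hi)).2
    calc g i ≤ f i + M := by linarith
    _ ≤ M + s.sup' hs f := by linarith [Finset.le_sup' f hi]

lemma abs_inf'_sub_inf'_le {α : Type*} (s : Finset α) (hs : s.Nonempty) (f g : α → ℝ) (M : ℝ)
    (h : ∀ i ∈ s, |f i - g i| ≤ M) : |s.inf' hs f - s.inf' hs g| ≤ M := by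
  rw [abs_sub_le_iff]
  constructor <;> rw [sub_le_iff_le_add] <;>
    [ (obtain ⟨i, hi, hif⟩ := Finset.exists_mem_eq_inf' hs g);
      (obtain ⟨i, hi, hif⟩ := Finset.exists_mem_eq_inf' hs f)] <;>
    rw [hif] <;> have h2 := abs_sub_le_iff.mp (h i hi)
  · linarith [Finset.inf'_le f hi]
  · linarith [Finset.inf'_le g hi]

noncomputable def bellman {X U D : Type*} [Fintype U] [Nonempty U] [Fintype D] [Nonempty D]
    (f : X → U → D → X) (r c : X → ℝ) (γ : ℝ) (V : X → ℝ) (x : X) : ℝ :=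
  min (c x) (max (r x)
    (γ * Finset.univ.sup' Finset.univ_nonempty
      (fun u => Finset.univ.inf' Finset.univ_nonempty (fun d => V (f x u d)))))

theorem stmt_7 {X U D : Type*} [Fintype X] [Nonempty X] [Fintype U] [Nonempty U]
    [Fintype D] [Nonempty D] (f : X → U → D → X) (r c : X → ℝ) (γ : ℝ)
    (hγ0 : 0 ≤ γ) (hγ1 : γ < 1) (V₁ V₂ : X → ℝ)
    (h₁ : bellman f r c γ V₁ = V₁) (h₂ : bellman f r c γ V₂ = V₂) :
    V₁ = V₂ := by
  set M := Finset.univ.sup' Finset.univ_nonempty (fun x => |V₁ x - V₂ x|) with hM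
  have hbd : ∀ x, |V₁ x - V₂ x| ≤ M := fun x =>
    Finset.le_sup' (fun x => |V₁ x - V₂ x|) (Finset.mem_univ x)
  have key : ∀ x, |V₁ x - V₂ x| ≤ γ * M := by
    intro x
    rw [← congrFun h₁ x, ← congrFun h₂ x]
    unfold bellman
    refine (abs_min_sub_min_le_max _ _ _ _).trans (max_le (by simp [mul_nonneg hγ0 (le_trans (abs_nonneg _) (hbd (Classical.arbitrary X)))]) ?_)
    refine (abs_max_sub_max_le_max _ _ _ _).trans (max_le (by simp [mul_nonneg hγ0 (le_trans (abs_nonneg _) (hbd (Classical.arbitrary X)))]) ?_)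
    rw [← mul_sub, abs_mul, abs_of_nonneg hγ0]
    gcongr
    refine abs_sup'_sub_sup'_le _ _ _ _ _ (fun u _ => ?_)
    exact abs_inf'_sub_inf'_le _ _ _ _ _ (fun d _ => hbd _)
  have hMle : M ≤ γ * M := by
    rw [hM]; exact Finset.sup'_le _ _ (fun x _ => key x)
  have hM0 : M ≤ 0 := by nlinarith
  funext x
  have h3 : |V₁ x - V₂ x| ≤ 0 := (hbd x).trans hM0
  have h4 : V₁ x - V₂ x = 0 := abs_eq_zero.mp (le_antisymm h3 (abs_nonneg _))
  linarith
end

section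
/- Let B_CQL[V](x) := B[V](x) − λ with λ ≥ 0, where B is the reach-avoid Bellman operator on a finite state space. If V_CQL and V are the unique fixed points of B_CQL and B respectively, then for all x, V(x) − λ/(1−γ) ≤ V_CQL(x) ≤ V(x) − λ. -/
lemma bellman_lip {X U D : Type*} [Fintype U] [Nonempty U] [Fintype D] [Nonempty D]
    (f : X → U → D → X) (r c : X → ℝ) (γ : ℝ) (hγ0 : 0 ≤ γ)
    (V1 V2 : X → ℝ) (b : ℝ) (hb : 0 ≤ b) (h : ∀ y, V1 y ≤ V2 y + b) (x : X) :
    bellman f r c γ V1 x ≤ bellman f r c γ V2 x + γ * b := by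
  unfold bellman
  have hs : Finset.univ.sup' Finset.univ_nonempty
      (fun u => Finset.univ.inf' Finset.univ_nonempty (fun d => V1 (f x u d)))
      ≤ Finset.univ.sup' Finset.univ_nonempty
      (fun u => Finset.univ.inf' Finset.univ_nonempty (fun d => V2 (f x u d))) + b := by
    apply Finset.sup'_le
    intro u _
    obtain ⟨d, _, hd⟩ := Finset.exists_mem_eq_inf' (Finset.univ_nonempty)
      (fun d => V2 (f x u d))
    have h1 : Finset.univ.inf' Finset.univ_nonempty (fun d => V1 (f x u d)) ≤ V1 (f x u d) :=
      Finset.inf'_le _ (Finset.mem_univ d)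
    have h2 : Finset.univ.inf' Finset.univ_nonempty (fun d => V2 (f x u d))
        ≤ Finset.univ.sup' Finset.univ_nonempty
        (fun u => Finset.univ.inf' Finset.univ_nonempty (fun d => V2 (f x u d))) :=
      Finset.le_sup' (fun u => Finset.univ.inf' Finset.univ_nonempty (fun d => V2 (f x u d)))
        (Finset.mem_univ u)
    have := h (f x u d)
    rw [hd] at h2
    linarith
  have hγb : 0 ≤ γ * b := mul_nonneg hγ0 hb
  have hmul : γ * Finset.univ.sup' Finset.univ_nonempty
      (fun u => Finset.univ.inf' Finset.univ_nonempty (fun d => V1 (f x u d)))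
      ≤ γ * Finset.univ.sup' Finset.univ_nonempty
      (fun u => Finset.univ.inf' Finset.univ_nonempty (fun d => V2 (f x u d))) + γ * b := by
    nlinarith [mul_le_mul_of_nonneg_left hs hγ0]
  set A := γ * Finset.univ.sup' Finset.univ_nonempty
      (fun u => Finset.univ.inf' Finset.univ_nonempty (fun d => V1 (f x u d)))
  set B := γ * Finset.univ.sup' Finset.univ_nonempty
      (fun u => Finset.univ.inf' Finset.univ_nonempty (fun d => V2 (f x u d)))
  have hmax : max (r x) A ≤ max (r x) B + γ * b := by
    apply max_le
    · have : r x ≤ max (r x) B := le_max_left _ _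
      linarith
    · have : B ≤ max (r x) B := le_max_right _ _
      linarith
  have e : min (c x) (max (r x) B) + γ * b = min (c x + γ * b) (max (r x) B + γ * b) := by
    rcases le_total (c x) (max (r x) B) with h' | h'
    · rw [min_eq_left h', min_eq_left (by linarith)]
    · rw [min_eq_right h', min_eq_right (by linarith)]
  rw [e]
  apply le_min
  · have := min_le_left (c x) (max (r x) A); linarith
  · have := min_le_right (c x) (max (r x) A); linarith

theorem stmt_9 {X U D : Type*} [Fintype X] [Nonempty X] [Fintype U] [Nonempty U]
    [Fintype D] [Nonempty D] (f : X → U → D → X) (r c : X → ℝ) (γ lam : ℝ)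
    (hγ0 : 0 ≤ γ) (hγ1 : γ < 1) (hlam : 0 ≤ lam)
    (V VCQL : X → ℝ)
    (hV : bellman f r c γ V = V)
    (hVCQL : (fun x => bellman f r c γ VCQL x - lam) = VCQL) :
    ∀ x, V x - lam / (1 - γ) ≤ VCQL x ∧ VCQL x ≤ V x - lam := by
  have hV' : ∀ x, bellman f r c γ V x = V x := fun x => congrFun hV x
  have hC' : ∀ x, bellman f r c γ VCQL x - lam = VCQL x := fun x => congrFun hVCQL x
  set Δ : X → ℝ := fun y => V y - VCQL y with hΔ
  set M : ℝ := Finset.univ.sup' Finset.univ_nonempty Δ with hM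
  set m : ℝ := Finset.univ.inf' Finset.univ_nonempty Δ with hm
  have hle : ∀ y, Δ y ≤ M := fun y => Finset.le_sup' Δ (Finset.mem_univ y)
  have hge : ∀ y, m ≤ Δ y := fun y => Finset.inf'_le Δ (Finset.mem_univ y)
  obtain ⟨x0, _, hx0⟩ := Finset.exists_mem_eq_sup' (Finset.univ_nonempty (α := X)) Δ
  obtain ⟨x1, _, hx1⟩ := Finset.exists_mem_eq_inf' (Finset.univ_nonempty (α := X)) Δ
  have hγ1' : (0:ℝ) < 1 - γ := by linarith
  -- upper bound on M
  have hMup : M ≤ lam / (1 - γ) := by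
    have key : bellman f r c γ V x0 ≤ bellman f r c γ VCQL x0 + γ * max M 0 := by
      apply bellman_lip f r c γ hγ0 V VCQL (max M 0) (le_max_right _ _)
      intro y
      have := hle y
      have : V y - VCQL y ≤ max M 0 := le_trans this (le_max_left _ _)
      linarith
    have hMx : M = Δ x0 := hx0
    have e1 := hV' x0
    have e2 := hC' x0
    rcases le_total M 0 with hM0 | hM0
    · exact le_trans hM0 (div_nonneg hlam (le_of_lt hγ1'))
    · rw [max_eq_left hM0] at key
      rw [le_div_iff₀ hγ1']
      have : Δ x0 = V x0 - VCQL x0 := rfl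
      nlinarith
  -- lower bound on m
  have hmlo : lam ≤ m := by
    have key : bellman f r c γ VCQL x1 ≤ bellman f r c γ V x1 + γ * max (-m) 0 := by
      apply bellman_lip f r c γ hγ0 VCQL V (max (-m) 0) (le_max_right _ _)
      intro y
      have := hge y
      have h2 : -m ≤ max (-m) 0 := le_max_left _ _
      have : VCQL y ≤ V y - m := by simp only [hΔ] at this; linarith
      linarith
    have hmx : m = Δ x1 := hx1
    have e1 := hV' x1
    have e2 := hC' x1
    have hΔx1 : Δ x1 = V x1 - VCQL x1 := rfl
    rcases le_total 0 m with hm0 | hm0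
    · rw [max_eq_right (by linarith : -m ≤ 0)] at key
      nlinarith
    · rw [max_eq_left (by linarith : 0 ≤ -m)] at key
      nlinarith
  intro x
  constructor
  · have := hle x
    have hΔx : Δ x = V x - VCQL x := rfl
    linarith
  · have := hge x
    have hΔx : Δ x = V x - VCQL x := rfl
    linarith
end

section
/- Fixed point existence for the discounted reach-avoid operator on a finite state space: with X, U, D nonempty finite types, r, c : X → ℝ bounded (automatic by finiteness), 0 ≤ γ < 1, and B[V](x) = min(c(x), max(r(x), γ · max_u min_d V(f(x,u,d)))), there exists a function V : X → ℝ with B[V] = V. -/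
lemma sup'_abs_sub_le {ι : Type*} (s : Finset ι) (hs : s.Nonempty) (g g' : ι → ℝ) (C : ℝ)
    (h : ∀ i ∈ s, |g i - g' i| ≤ C) : |s.sup' hs g - s.sup' hs g'| ≤ C := by
  rw [abs_sub_le_iff]
  constructor
  · rw [sub_le_iff_le_add]
    apply Finset.sup'_le
    intro i hi
    have := (abs_sub_le_iff.mp (h i hi)).1
    calc g i ≤ g' i + C := by linarith
      _ ≤ s.sup' hs g' + C := by
          have := Finset.le_sup' g' hi; linarith
      _ = C + s.sup' hs g' := by ring
  · rw [sub_le_iff_le_add]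
    apply Finset.sup'_le
    intro i hi
    have := (abs_sub_le_iff.mp (h i hi)).2
    calc g' i ≤ g i + C := by linarith
      _ ≤ s.sup' hs g + C := by
          have := Finset.le_sup' g hi; linarith
      _ = C + s.sup' hs g := by ring

lemma inf'_abs_sub_le {ι : Type*} (s : Finset ι) (hs : s.Nonempty) (g g' : ι → ℝ) (C : ℝ)
    (h : ∀ i ∈ s, |g i - g' i| ≤ C) : |s.inf' hs g - s.inf' hs g'| ≤ C := by
  rw [abs_sub_le_iff]
  constructor
  · rw [sub_le_iff_le_add]
    obtain ⟨i, hi, hig⟩ := s.exists_mem_eq_inf' hs g'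
    rw [hig]
    have h1 := (abs_sub_le_iff.mp (h i hi)).1
    have h2 := Finset.inf'_le g hi
    linarith
  · rw [sub_le_iff_le_add]
    obtain ⟨i, hi, hig⟩ := s.exists_mem_eq_inf' hs g
    rw [hig]
    have h1 := (abs_sub_le_iff.mp (h i hi)).2
    have h2 := Finset.inf'_le g' hi
    linarith

theorem stmt_19 {X U D : Type*} [Fintype X] [Nonempty X] [Fintype U] [Nonempty U]
    [Fintype D] [Nonempty D] (f : X → U → D → X) (r c : X → ℝ) (γ : ℝ)
    (hγ0 : 0 ≤ γ) (hγ1 : γ < 1) :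
    ∃ V : X → ℝ, bellman f r c γ V = V := by
  have hcontr : ContractingWith ⟨γ, hγ0⟩ (bellman f r c γ) := by
    refine ⟨by exact_mod_cast hγ1, LipschitzWith.of_dist_le_mul fun V W => ?_⟩
    show dist _ _ ≤ γ * dist V W
    rw [dist_pi_le_iff (by positivity)]
    · skip
      intro x
      rw [Real.dist_eq]
      unfold bellman
      have key : |γ * Finset.univ.sup' Finset.univ_nonempty
            (fun u => Finset.univ.inf' Finset.univ_nonempty (fun d => V (f x u d))) -
          γ * Finset.univ.sup' Finset.univ_nonempty
            (fun u => Finset.univ.inf' Finset.univ_nonempty (fun d => W (f x u d)))|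
          ≤ γ * dist V W := by
        rw [← mul_sub, abs_mul, abs_of_nonneg hγ0]
        apply mul_le_mul_of_nonneg_left _ hγ0
        apply sup'_abs_sub_le
        intro u _
        apply inf'_abs_sub_le
        intro d _
        rw [← Real.dist_eq]
        exact dist_le_pi_dist V W _
      have h1 := abs_max_sub_max_le_max (r x)
        (γ * Finset.univ.sup' Finset.univ_nonempty
          (fun u => Finset.univ.inf' Finset.univ_nonempty (fun d => V (f x u d)))) (r x)
        (γ * Finset.univ.sup' Finset.univ_nonempty
          (fun u => Finset.univ.inf' Finset.univ_nonempty (fun d => W (f x u d))))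
      simp only [sub_self, abs_zero] at h1
      have h2 := abs_min_sub_min_le_max (c x) (max (r x)
          (γ * Finset.univ.sup' Finset.univ_nonempty
            (fun u => Finset.univ.inf' Finset.univ_nonempty (fun d => V (f x u d)))))
        (c x) (max (r x)
          (γ * Finset.univ.sup' Finset.univ_nonempty
            (fun u => Finset.univ.inf' Finset.univ_nonempty (fun d => W (f x u d)))))
      simp only [sub_self, abs_zero] at h2
      calc _ ≤ _ := h2
        _ ≤ _ := by
            apply max_le (by positivity)
            exact le_trans h1 (max_le (by positivity) key)
  exact ⟨hcontr.fixedPoint (bellman f r c γ), hcontr.fixedPoint_isFixedPt⟩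
end
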